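/- arXiv:1601.02522 — 5 statements merged into one kernel-verified Lean document; each statement's English description precedes it below -/
import Mathlib

section
/- Let L be a real symmetric N×N matrix with orthonormal eigenbasis u_0,…,u_{N−1} and eigenvalues λ_0,…,λ_{N−1}, and let X be a random vector in ℝ^N (on a probability space, with all relevant second moments finite) whose covariance matrix is Σ_X = Σ_ℓ γ(λ_ℓ) u_ℓ u_ℓᵀ for some function γ : ℝ → ℝ. Then for any function g : ℝ → ℝ, the covariance matrix of the random vector g(L)X equals Σ_ℓ g(λ_ℓ)² γ(λ_ℓ) u_ℓ u_ℓᵀ; that is, filtering a GWSS signal yields a GWSS signal whose power spectral density is g²·γ. -/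
open Matrix BigOperators MeasureTheory

/-- The graph filter `g(L) = ∑ ℓ, g (λ ℓ) • u_ℓ u_ℓᵀ`, where `u_ℓ` are the columns of `U`. -/
noncomputable def graphFilter {N : ℕ} (U : Matrix (Fin N) (Fin N) ℝ) (lam : Fin N → ℝ)
    (g : ℝ → ℝ) : Matrix (Fin N) (Fin N) ℝ :=
  ∑ ℓ, g (lam ℓ) • Matrix.vecMulVec (fun i => U i ℓ) (fun i => U i ℓ)

lemma ortho_cols {N : ℕ} {U : Matrix (Fin N) (Fin N) ℝ} (hU : Uᵀ * U = 1) (p ℓ : Fin N) :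
    ∑ k, U k p * U k ℓ = if p = ℓ then 1 else 0 := by
  have := congrFun (congrFun hU p) ℓ
  simpa [Matrix.mul_apply, Matrix.transpose_apply, Matrix.one_apply] using this

lemma gf_apply' {N : ℕ} (U : Matrix (Fin N) (Fin N) ℝ) (lam : Fin N → ℝ) (g : ℝ → ℝ)
    (i k : Fin N) :
    graphFilter U lam g i k = ∑ p, g (lam p) * (U i p * U k p) := by
  simp [graphFilter, Matrix.sum_apply, Matrix.vecMulVec_apply]

lemma gf_col {N : ℕ} {U : Matrix (Fin N) (Fin N) ℝ} (lam : Fin N → ℝ) (g : ℝ → ℝ)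
    (hU : Uᵀ * U = 1) (ℓ i : Fin N) :
    ∑ k, graphFilter U lam g i k * U k ℓ = g (lam ℓ) * U i ℓ := by
  simp only [gf_apply', Finset.sum_mul]
  rw [Finset.sum_comm]
  have h1 : ∀ p : Fin N, ∑ k, g (lam p) * (U i p * U k p) * U k ℓ
      = g (lam p) * U i p * ∑ k, U k p * U k ℓ := by
    intro p; rw [Finset.mul_sum]; exact Finset.sum_congr rfl fun k _ => by ring
  simp only [h1, ortho_cols hU]
  simp [Finset.sum_ite_eq, mul_ite]

/-- **Theorem 2, second moment.** If a random vector `X` has covariance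
`∑ ℓ, γ(λ_ℓ) u_ℓ u_ℓᵀ` (i.e. it is GWSS with PSD `γ`), then the filtered signal `g(L)X` has
covariance `∑ ℓ, g(λ_ℓ)² γ(λ_ℓ) u_ℓ u_ℓᵀ`, i.e. it is GWSS with PSD `g²·γ`. -/
theorem filtered_GWSS_covariance
    {N : ℕ} {Ω : Type*} [MeasureSpace Ω] [IsProbabilityMeasure (volume : Measure Ω)]
    (L U : Matrix (Fin N) (Fin N) ℝ) (lam : Fin N → ℝ) (γ g : ℝ → ℝ)
    (X : Ω → Fin N → ℝ) (m : Fin N → ℝ)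
    (hLsym : L.IsSymm) (hU : Uᵀ * U = 1)
    (hEig : ∀ ℓ, L.mulVec (fun i => U i ℓ) = lam ℓ • (fun i => U i ℓ))
    (hXmeas : ∀ i, AEMeasurable (fun ω => X ω i))
    (hmean : ∀ i, Integrable (fun ω => X ω i) ∧ (∫ ω, X ω i) = m i)
    (hInt : ∀ i j, Integrable (fun ω => (X ω i - m i) * (X ω j - m j)))
    (hCov : ∀ i j, (∫ ω, (X ω i - m i) * (X ω j - m j)) =
      (∑ ℓ, γ (lam ℓ) • Matrix.vecMulVec (fun i => U i ℓ) (fun i => U i ℓ)) i j) :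
    ∀ i j, (∫ ω, ((graphFilter U lam g).mulVec (X ω) i - (graphFilter U lam g).mulVec m i) *
        ((graphFilter U lam g).mulVec (X ω) j - (graphFilter U lam g).mulVec m j)) =
      (∑ ℓ, ((g (lam ℓ))^2 * γ (lam ℓ)) •
        Matrix.vecMulVec (fun i => U i ℓ) (fun i => U i ℓ)) i j := by
  intro i j
  set H := graphFilter U lam g with hH
  have key : ∀ (v : Fin N → ℝ) (i : Fin N),
      H.mulVec v i - H.mulVec m i = ∑ k, H i k * (v k - m k) := by
    intro v i
    simp [Matrix.mulVec, dotProduct, mul_sub, Finset.sum_sub_distrib]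
  have hint2 : ∀ k l : Fin N,
      Integrable (fun ω => (H i k * H j l) * ((X ω k - m k) * (X ω l - m l))) :=
    fun k l => (hInt k l).const_mul _
  have hCov' : ∀ k l : Fin N, (∫ ω, (X ω k - m k) * (X ω l - m l)) =
      ∑ ℓ, γ (lam ℓ) * (U k ℓ * U l ℓ) := by
    intro k l
    rw [hCov k l]
    simp [Matrix.sum_apply, Matrix.vecMulVec_apply]
  calc (∫ ω, (H.mulVec (X ω) i - H.mulVec m i) * (H.mulVec (X ω) j - H.mulVec m j))
      = ∫ ω, ∑ k, ∑ l, (H i k * H j l) * ((X ω k - m k) * (X ω l - m l)) := by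
        congr 1; funext ω
        rw [key, key, Finset.sum_mul_sum]
        exact Finset.sum_congr rfl fun k _ => Finset.sum_congr rfl fun l _ => by ring
    _ = ∑ k, ∑ l, (H i k * H j l) * ∫ ω, (X ω k - m k) * (X ω l - m l) := by
        rw [integral_finset_sum _ (fun k _ => integrable_finset_sum _ (fun l _ => hint2 k l))]
        exact Finset.sum_congr rfl fun k _ => by
          rw [integral_finset_sum _ (fun l _ => hint2 k l)]
          exact Finset.sum_congr rfl fun l _ => integral_const_mul _ _
    _ = ∑ k, ∑ l, ∑ ℓ, γ (lam ℓ) * ((H i k * U k ℓ) * (H j l * U l ℓ)) := by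
        refine Finset.sum_congr rfl fun k _ => Finset.sum_congr rfl fun l _ => ?_
        rw [hCov', Finset.mul_sum]
        exact Finset.sum_congr rfl fun ℓ _ => by ring
    _ = ∑ ℓ, ∑ k, ∑ l, γ (lam ℓ) * ((H i k * U k ℓ) * (H j l * U l ℓ)) := by
        exact Eq.trans (Finset.sum_congr rfl fun k _ => Finset.sum_comm) Finset.sum_comm
    _ = ∑ ℓ, γ (lam ℓ) * ((∑ k, H i k * U k ℓ) * (∑ l, H j l * U l ℓ)) := by
        refine Finset.sum_congr rfl fun ℓ _ => ?_
        rw [Finset.sum_mul_sum, Finset.mul_sum]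
        refine Finset.sum_congr rfl fun k _ => ?_
        rw [Finset.mul_sum]
    _ = (∑ ℓ, ((g (lam ℓ))^2 * γ (lam ℓ)) •
        Matrix.vecMulVec (fun i => U i ℓ) (fun i => U i ℓ)) i j := by
        simp only [hH, gf_col lam g hU, Matrix.sum_apply, Matrix.smul_apply,
          Matrix.vecMulVec_apply, smul_eq_mul]
        exact Finset.sum_congr rfl fun ℓ _ => by ring
end

section
/- Let L be a real symmetric N×N matrix with orthonormal eigenbasis u_0,…,u_{N−1} and eigenvalues λ_0,…,λ_{N−1}, and let X be a zero-mean random vector in ℝ^N with covariance Σ_X = Σ_ℓ γ(λ_ℓ) u_ℓ u_ℓᵀ for some γ : ℝ → ℝ. Let g : ℝ → ℝ, a ∈ ℝ, and define the shifted filter g_a(λ) = g(λ − a). Then E[‖g_a(L)X‖₂²] = Σ_ℓ g(λ_ℓ − a)² γ(λ_ℓ) and ‖g_a(L)‖_F² = Σ_ℓ g(λ_ℓ − a)²; hence, whenever Σ_ℓ g(λ_ℓ − a)² ≠ 0, the expected value of the power spectral density estimator satisfies E[‖g_a(L)X‖₂²] / ‖g_a(L)‖_F² = (Σ_ℓ g(λ_ℓ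 − a)² γ(λ_ℓ)) / (Σ_ℓ g(λ_ℓ − a)²). -/
open Matrix BigOperators MeasureTheory

lemma quad2 {N : ℕ} (U : Matrix (Fin N) (Fin N) ℝ)
    (horth : ∀ ℓ m, (∑ i, U i ℓ * U i m) = if ℓ = m then (1:ℝ) else 0)
    (α β : Fin N → ℝ) (j k : Fin N) :
    ∑ i, (∑ ℓ, α ℓ * (U i ℓ * U j ℓ)) * (∑ m, β m * (U i m * U k m)) =
      ∑ ℓ, (α ℓ * β ℓ) * (U j ℓ * U k ℓ) := by
  calc ∑ i, (∑ ℓ, α ℓ * (U i ℓ * U j ℓ)) * (∑ m, β m * (U i m * U k m))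
      = ∑ i, ∑ ℓ, ∑ m, (α ℓ * β m * (U j ℓ * U k m)) * (U i ℓ * U i m) := by
        refine Finset.sum_congr rfl fun i _ => ?_
        rw [Finset.sum_mul_sum]
        exact Finset.sum_congr rfl fun ℓ _ => Finset.sum_congr rfl fun m _ => by ring
    _ = ∑ ℓ, ∑ m, (α ℓ * β m * (U j ℓ * U k m)) * ∑ i, U i ℓ * U i m := by
        rw [Finset.sum_comm]
        refine Finset.sum_congr rfl fun ℓ _ => ?_
        rw [Finset.sum_comm]
        simp [Finset.mul_sum]
    _ = ∑ ℓ, (α ℓ * β ℓ) * (U j ℓ * U k ℓ) := by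
        simp only [horth, mul_ite, mul_one, mul_zero]
        simp [Finset.sum_ite_eq']


/-- **Equation (15): bias of the PSD estimator.** For a zero-mean GWSS signal `X` with PSD `γ`
and the shifted filter `g_a(λ) = g(λ - a)`, one has `E[‖g_a(L)X‖₂²] = ∑ ℓ, g(λ_ℓ - a)² γ(λ_ℓ)`,
`‖g_a(L)‖_F² = ∑ ℓ, g(λ_ℓ - a)²`, and hence the expected value of the PSD estimator is the
smoothed PSD `(∑ ℓ, g(λ_ℓ - a)² γ(λ_ℓ)) / (∑ ℓ, g(λ_ℓ - a)²)`. -/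
theorem psd_estimator_expectation
    {N : ℕ} {Ω : Type*} [MeasureSpace Ω] [IsProbabilityMeasure (volume : Measure Ω)]
    (L U : Matrix (Fin N) (Fin N) ℝ) (lam : Fin N → ℝ) (γ g : ℝ → ℝ) (a : ℝ)
    (X : Ω → Fin N → ℝ)
    (hLsym : L.IsSymm) (hU : Uᵀ * U = 1)
    (hEig : ∀ ℓ, L.mulVec (fun i => U i ℓ) = lam ℓ • (fun i => U i ℓ))
    (hmean : ∀ i, Integrable (fun ω => X ω i) ∧ (∫ ω, X ω i) = 0)
    (hInt : ∀ i j, Integrable (fun ω => X ω i * X ω j))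
    (hCov : ∀ i j, (∫ ω, X ω i * X ω j) =
      (∑ ℓ, γ (lam ℓ) • Matrix.vecMulVec (fun i => U i ℓ) (fun i => U i ℓ)) i j) :
    ((∫ ω, ∑ i, ((graphFilter U lam (fun t => g (t - a))).mulVec (X ω) i)^2) =
        ∑ ℓ, (g (lam ℓ - a))^2 * γ (lam ℓ)) ∧
    ((∑ i, ∑ j, ((graphFilter U lam (fun t => g (t - a))) i j)^2) =
        ∑ ℓ, (g (lam ℓ - a))^2) ∧
    ((∑ ℓ, (g (lam ℓ - a))^2) ≠ 0 →
      (∫ ω, ∑ i, ((graphFilter U lam (fun t => g (t - a))).mulVec (X ω) i)^2) /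
          (∑ i, ∑ j, ((graphFilter U lam (fun t => g (t - a))) i j)^2) =
        (∑ ℓ, (g (lam ℓ - a))^2 * γ (lam ℓ)) / (∑ ℓ, (g (lam ℓ - a))^2)) := by
  have horth : ∀ ℓ m, (∑ i, U i ℓ * U i m) = if ℓ = m then (1:ℝ) else 0 := by
    intro ℓ m
    have := congrFun (congrFun hU ℓ) m
    simpa [Matrix.mul_apply, Matrix.transpose_apply, Matrix.one_apply] using this
  set c : Fin N → ℝ := fun ℓ => g (lam ℓ - a) with hc
  set F := graphFilter U lam (fun t => g (t - a)) with hF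
  have hFentry : ∀ i j, F i j = ∑ ℓ, c ℓ * (U i ℓ * U j ℓ) := by
    intro i j
    simp [hF, graphFilter, Matrix.sum_apply, Matrix.vecMulVec_apply, hc]
  have hCov' : ∀ j k, (∫ ω, X ω j * X ω k) = ∑ m, γ (lam m) * (U j m * U k m) := by
    intro j k
    rw [hCov]
    simp [Matrix.sum_apply, Matrix.vecMulVec_apply]
  -- part 2
  have part2 : (∑ i, ∑ j, (F i j)^2) = ∑ ℓ, c ℓ ^ 2 := by
    calc ∑ i, ∑ j, (F i j)^2
        = ∑ j, ∑ i, (∑ ℓ, c ℓ * (U i ℓ * U j ℓ)) * (∑ m, c m * (U i m * U j m)) := by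
          rw [Finset.sum_comm]
          exact Finset.sum_congr rfl fun j _ => Finset.sum_congr rfl fun i _ => by
            rw [hFentry i j]; ring
      _ = ∑ j, ∑ ℓ, (c ℓ * c ℓ) * (U j ℓ * U j ℓ) := by
          exact Finset.sum_congr rfl fun j _ => quad2 U horth c c j j
      _ = ∑ ℓ, (c ℓ * c ℓ) * ∑ j, U j ℓ * U j ℓ := by
          rw [Finset.sum_comm]; simp [Finset.mul_sum]
      _ = ∑ ℓ, c ℓ ^ 2 := by
          simp only [horth]; simp [pow_two]
  -- part 1
  have part1 : (∫ ω, ∑ i, (F.mulVec (X ω) i)^2) = ∑ ℓ, c ℓ ^ 2 * γ (lam ℓ) := by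
    have hexp : ∀ ω i, (F.mulVec (X ω) i)^2 =
        ∑ j, ∑ k, (F i j * F i k) * (X ω j * X ω k) := by
      intro ω i
      rw [Matrix.mulVec, dotProduct]
      rw [pow_two, Finset.sum_mul_sum]
      exact Finset.sum_congr rfl fun j _ => Finset.sum_congr rfl fun k _ => by ring
    have hint2 : ∀ (i j k : Fin N), Integrable (fun ω => (F i j * F i k) * (X ω j * X ω k)) :=
      fun i j k => (hInt j k).const_mul _
    calc (∫ ω, ∑ i, (F.mulVec (X ω) i)^2)
        = ∫ ω, ∑ i, ∑ j, ∑ k, (F i j * F i k) * (X ω j * X ω k) := by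
          refine integral_congr_ae (Filter.Eventually.of_forall fun ω => ?_)
          exact Finset.sum_congr rfl fun i _ => hexp ω i
      _ = ∑ i, ∑ j, ∑ k, (F i j * F i k) * ∫ ω, X ω j * X ω k := by
          rw [integral_finset_sum _ (fun i _ => integrable_finset_sum _
            (fun j _ => integrable_finset_sum _ (fun k _ => hint2 i j k)))]
          refine Finset.sum_congr rfl fun i _ => ?_
          rw [integral_finset_sum _ (fun j _ => integrable_finset_sum _ (fun k _ => hint2 i j k))]
          refine Finset.sum_congr rfl fun j _ => ?_
          rw [integral_finset_sum _ (fun k _ => hint2 i j k)]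
          exact Finset.sum_congr rfl fun k _ => MeasureTheory.integral_const_mul _ _
      _ = ∑ j, ∑ k, (∑ i, (∑ ℓ, c ℓ * (U i ℓ * U j ℓ)) * (∑ m, c m * (U i m * U k m))) *
            ∫ ω, X ω j * X ω k := by
          rw [Finset.sum_comm]
          refine Finset.sum_congr rfl fun j _ => ?_
          rw [Finset.sum_comm]
          refine Finset.sum_congr rfl fun k _ => ?_
          rw [Finset.sum_mul]
          refine Finset.sum_congr rfl fun i _ => ?_
          rw [hFentry i j, hFentry i k]
      _ = ∑ j, ∑ k, (∑ ℓ, (c ℓ * c ℓ) * (U j ℓ * U k ℓ)) *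
            (∑ m, γ (lam m) * (U j m * U k m)) := by
          refine Finset.sum_congr rfl fun j _ => Finset.sum_congr rfl fun k _ => ?_
          rw [quad2 U horth c c j k, hCov' j k]
      _ = ∑ j, ∑ ℓ, ((c ℓ * c ℓ) * γ (lam ℓ)) * (U j ℓ * U j ℓ) := by
          refine Finset.sum_congr rfl fun j _ => ?_
          have := quad2 U horth (fun ℓ => c ℓ * c ℓ) (fun m => γ (lam m)) j j
          calc ∑ k, (∑ ℓ, (c ℓ * c ℓ) * (U j ℓ * U k ℓ)) * (∑ m, γ (lam m) * (U j m * U k m))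
              = ∑ k, (∑ ℓ, (c ℓ * c ℓ) * (U k ℓ * U j ℓ)) * (∑ m, γ (lam m) * (U k m * U j m)) := by
                refine Finset.sum_congr rfl fun k _ => ?_
                congr 1 <;> exact Finset.sum_congr rfl fun x _ => by ring
            _ = ∑ ℓ, ((c ℓ * c ℓ) * γ (lam ℓ)) * (U j ℓ * U j ℓ) := this
      _ = ∑ ℓ, ((c ℓ * c ℓ) * γ (lam ℓ)) * ∑ j, U j ℓ * U j ℓ := by
          rw [Finset.sum_comm]; simp [Finset.mul_sum]
      _ = ∑ ℓ, c ℓ ^ 2 * γ (lam ℓ) := by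
          simp only [horth]; simp [pow_two]
  refine ⟨part1, part2, fun h => ?_⟩
  rw [part1, part2]
end

section
/- Let L be a real symmetric N×N matrix with orthonormal eigenbasis u_0,…,u_{N−1} (columns of U) and pairwise distinct eigenvalues λ_0,…,λ_{N−1} satisfying 0 ≤ λ_ℓ < ρ for some ρ > 0. Define the unitary complex matrix B = Σ_ℓ exp(2πi·√(λ_ℓ/ρ)) u_ℓ u_ℓ*. Then for a real symmetric N×N matrix Σ, the following are equivalent: (i) B Σ B* = Σ; (ii) U* Σ U is diagonal; (iii) there exists γ : ℝ → ℝ with Σ = Σ_ℓ γ(λ_ℓ) u_ℓ u_ℓᵀ. -/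
open Matrix BigOperators

private lemma aux_sum_vecMulVec {N : ℕ} {K : Type*} [CommRing K]
    (V : Matrix (Fin N) (Fin N) K) (c : Fin N → K) :
    ∑ ℓ, c ℓ • Matrix.vecMulVec (fun i => V i ℓ) (fun i => V i ℓ)
      = V * Matrix.diagonal c * Vᵀ := by
  ext i j
  simp only [Matrix.sum_apply, Matrix.smul_apply, Matrix.vecMulVec_apply, smul_eq_mul,
    Matrix.mul_apply, Matrix.diagonal_apply, Matrix.transpose_apply, mul_ite, mul_zero,
    ite_mul, zero_mul, Finset.sum_ite_eq, Finset.sum_ite_eq', Finset.mem_univ, if_true]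
  exact Finset.sum_congr rfl fun k _ => by ring

private lemma aux_sandwich {n : ℕ} {K : Type*} [CommRing K]
    {A B : Matrix (Fin n) (Fin n) K} (hAB : A * B = 1) (X : Matrix (Fin n) (Fin n) K) :
    A * (B * X * A) * B = X := by
  calc A * (B * X * A) * B = (A * B) * X * (A * B) := by simp only [Matrix.mul_assoc]
    _ = X := by rw [hAB, Matrix.one_mul, Matrix.mul_one]

/-- **Equivalence with Girault's stationarity (Section III.B).** Let `L` be real symmetric with
orthonormal eigenbasis (columns of `U`) and pairwise distinct eigenvalues `λ_ℓ ∈ [0, ρ)`, and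
let `B = ∑ ℓ, exp(2πi√(λ_ℓ/ρ)) u_ℓ u_ℓ*` be Girault's isometric translation operator. Then for
a real symmetric matrix `S`: invariance `B S B* = S` is equivalent to `Uᵀ S U` being diagonal,
which is in turn equivalent to `S` being a graph filter `∑ ℓ, γ(λ_ℓ) u_ℓ u_ℓᵀ` for some
`γ : ℝ → ℝ`. -/
theorem girault_stationarity_equiv_GWSS
    {N : ℕ} (L U S : Matrix (Fin N) (Fin N) ℝ) (lam : Fin N → ℝ) (ρ : ℝ)
    (B : Matrix (Fin N) (Fin N) ℂ)
    (hρ : 0 < ρ) (hlam : ∀ ℓ, 0 ≤ lam ℓ ∧ lam ℓ < ρ)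
    (hinj : Function.Injective lam)
    (hLsym : L.IsSymm) (hSsym : S.IsSymm) (hU : Uᵀ * U = 1)
    (hEig : ∀ ℓ, L.mulVec (fun i => U i ℓ) = lam ℓ • (fun i => U i ℓ))
    (hB : B = ∑ ℓ, Complex.exp (2 * Real.pi * Complex.I * Real.sqrt (lam ℓ / ρ)) •
      Matrix.vecMulVec (fun i => (U i ℓ : ℂ)) (fun j => (U j ℓ : ℂ))) :
    (B * S.map Complex.ofReal * Bᴴ = S.map Complex.ofReal ↔ (Uᵀ * S * U).IsDiag) ∧
    ((Uᵀ * S * U).IsDiag ↔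
      ∃ γ : ℝ → ℝ,
        S = ∑ ℓ, γ (lam ℓ) • Matrix.vecMulVec (fun i => U i ℓ) (fun i => U i ℓ)) := by
  classical
  set e : Fin N → ℂ := fun ℓ => Complex.exp (2 * Real.pi * Complex.I * Real.sqrt (lam ℓ / ρ))
    with he
  set Uc : Matrix (Fin N) (Fin N) ℂ := U.map Complex.ofReal with hUcdef
  set Sc : Matrix (Fin N) (Fin N) ℂ := S.map Complex.ofReal with hScdef
  have hUU : U * Uᵀ = 1 := mul_eq_one_comm.mp hU
  have horth : ∀ k l, ∑ i, U i k * U i l = if k = l then (1:ℝ) else 0 := by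
    intro k l
    have h := congrFun (congrFun hU k) l
    simpa [Matrix.mul_apply, Matrix.one_apply] using h
  have hUcU : Ucᵀ * Uc = 1 := by
    ext k l
    simp only [Matrix.mul_apply, Matrix.transpose_apply, hUcdef, Matrix.map_apply,
      Matrix.one_apply, ← Complex.ofReal_mul]
    rw [← Complex.ofReal_sum, horth]
    split <;> simp
  have hUcUc : Uc * Ucᵀ = 1 := mul_eq_one_comm.mp hUcU
  -- B as a diagonalized matrix
  have hBd : B = Uc * Matrix.diagonal e * Ucᵀ := by
    rw [hB, ← aux_sum_vecMulVec Uc e]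
    rfl
  have hUcH : Ucᴴ = Ucᵀ := by
    ext i j
    simp [hUcdef, Matrix.conjTranspose_apply, Matrix.map_apply]
  have hUcTH : (Ucᵀ)ᴴ = Uc := by
    ext i j
    simp [hUcdef, Matrix.conjTranspose_apply, Matrix.map_apply]
  have hBH : Bᴴ = Uc * Matrix.diagonal (star e) * Ucᵀ := by
    rw [hBd, Matrix.conjTranspose_mul, Matrix.conjTranspose_mul, hUcTH, hUcH,
      Matrix.diagonal_conjTranspose]
    simp only [Matrix.mul_assoc]
  set Mc : Matrix (Fin N) (Fin N) ℂ := Ucᵀ * Sc * Uc with hMcdef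
  have hScM : Uc * Mc * Ucᵀ = Sc := by
    rw [hMcdef]; exact aux_sandwich hUcUc Sc
  -- key: e k * star (e l) = 1 ↔ k = l
  have hsq0 : ∀ ℓ, (0:ℝ) ≤ Real.sqrt (lam ℓ / ρ) := fun ℓ => Real.sqrt_nonneg _
  have hsq1 : ∀ ℓ, Real.sqrt (lam ℓ / ρ) < 1 := by
    intro ℓ
    have h1 : lam ℓ / ρ < 1 := (div_lt_one hρ).mpr (hlam ℓ).2
    have h0 : 0 ≤ lam ℓ / ρ := div_nonneg (hlam ℓ).1 hρ.le
    calc Real.sqrt (lam ℓ / ρ) < Real.sqrt 1 := Real.sqrt_lt_sqrt h0 h1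
      _ = 1 := Real.sqrt_one
  have hstar : ∀ ℓ, star (e ℓ) =
      Complex.exp (-(2 * Real.pi * Complex.I * Real.sqrt (lam ℓ / ρ))) := by
    intro ℓ
    rw [he]
    rw [show (star (Complex.exp (2 * Real.pi * Complex.I * Real.sqrt (lam ℓ / ρ))) : ℂ)
        = (starRingEnd ℂ) (Complex.exp (2 * Real.pi * Complex.I * Real.sqrt (lam ℓ / ρ))) from rfl,
      ← Complex.exp_conj]
    congr 1
    simp only [_root_.map_mul, Complex.conj_I, Complex.conj_ofReal, map_ofNat]
    ring
  have hunit : ∀ k l, e k * star (e l) = 1 ↔ k = l := by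
    intro k l
    constructor
    · intro h
      rw [hstar, he, ← Complex.exp_add, Complex.exp_eq_one_iff] at h
      obtain ⟨n, hn⟩ := h
      have h2 : (2 * (Real.pi:ℂ) * Complex.I : ℂ) ≠ 0 := by
        simp [Complex.I_ne_zero, Real.pi_ne_zero]
      have hc : (2 * (Real.pi:ℂ) * Complex.I) *
          ((Real.sqrt (lam k / ρ) : ℂ) - (Real.sqrt (lam l / ρ) : ℂ))
          = (2 * (Real.pi:ℂ) * Complex.I) * (n : ℂ) := by
        push_cast at hn ⊢
        linear_combination hn
      have hc' := mul_left_cancel₀ h2 hc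
      have hab : Real.sqrt (lam k / ρ) - Real.sqrt (lam l / ρ) = (n : ℝ) := by
        exact_mod_cast hc'
      have hn0 : n = 0 := by
        have habs : |(n:ℝ)| < 1 := by
          rw [← hab, abs_sub_lt_iff]
          constructor <;> nlinarith [hsq0 k, hsq1 k, hsq0 l, hsq1 l]
        have : |n| < 1 := by exact_mod_cast habs
        exact Int.abs_lt_one_iff.mp this
      have hs : Real.sqrt (lam k / ρ) = Real.sqrt (lam l / ρ) := by
        rw [hn0] at hab; push_cast at hab; linarith
      have hd : lam k / ρ = lam l / ρ := by
        have h1 := congrArg (fun x => x ^ 2) hs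
        simpa [Real.sq_sqrt (div_nonneg (hlam k).1 hρ.le),
          Real.sq_sqrt (div_nonneg (hlam l).1 hρ.le)] using h1
      apply hinj
      field_simp at hd
      exact hd
    · rintro rfl
      rw [hstar, he, ← Complex.exp_add]
      simp
  -- first equivalence
  have cancel : ∀ X Y : Matrix (Fin N) (Fin N) ℂ,
      Uc * X * Ucᵀ = Uc * Y * Ucᵀ ↔ X = Y := by
    intro X Y
    constructor
    · intro h
      have h' := congrArg (fun Z => Ucᵀ * Z * Uc) h
      rwa [aux_sandwich hUcU X, aux_sandwich hUcU Y] at h'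
    · intro h; rw [h]
  have h1 : B * Sc * Bᴴ = Uc * (Matrix.diagonal e * Mc * Matrix.diagonal (star e)) * Ucᵀ := by
    rw [hBH, hBd, hMcdef]
    simp only [Matrix.mul_assoc]
  have h2 : (B * Sc * Bᴴ = Sc) ↔
      Matrix.diagonal e * Mc * Matrix.diagonal (star e) = Mc := by
    rw [h1, ← hScM, cancel]
  have hdiag_iff : Matrix.diagonal e * Mc * Matrix.diagonal (star e) = Mc ↔ Mc.IsDiag := by
    constructor
    · intro h k l hkl
      have h' : (Matrix.diagonal e * Mc * Matrix.diagonal (star e)) k l = Mc k l := by rw [h]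
      rw [Matrix.mul_diagonal, Matrix.diagonal_mul] at h'
      by_contra hne
      have h'' : (e k * star (e l)) * Mc k l = 1 * Mc k l := by
        rw [one_mul]; linear_combination h'
      exact hkl ((hunit k l).mp (mul_right_cancel₀ hne h''))
    · intro hdiag
      ext k l
      rw [Matrix.mul_diagonal, Matrix.diagonal_mul]
      by_cases hkl : k = l
      · subst hkl
        have h1 : e k * star (e k) = 1 := (hunit k k).mpr rfl
        rw [Pi.star_apply]
        linear_combination Mc k k * h1
      · rw [hdiag hkl]; simp
  have hMcmap : ∀ k l, Mc k l = ((Uᵀ * S * U) k l : ℂ) := by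
    intro k l
    simp only [hMcdef, hUcdef, hScdef, Matrix.mul_apply, Matrix.transpose_apply,
      Matrix.map_apply]
    push_cast
    rfl
  have hfinal : Mc.IsDiag ↔ (Uᵀ * S * U).IsDiag := by
    constructor
    · intro h i j hij
      have h0 : ((Uᵀ * S * U) i j : ℂ) = 0 := (hMcmap i j).symm.trans (h hij)
      exact_mod_cast h0
    · intro h i j hij
      exact (hMcmap i j).trans (by exact_mod_cast h hij)
  refine ⟨h2.trans (hdiag_iff.trans hfinal), ?_⟩
  -- second equivalence
  constructor
  · intro hdiag
    have hSM : U * (Uᵀ * S * U) * Uᵀ = S := aux_sandwich hUU S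
    set M : Matrix (Fin N) (Fin N) ℝ := Uᵀ * S * U with hMdef
    refine ⟨fun x => if h : ∃ ℓ, lam ℓ = x then M h.choose h.choose else 0, ?_⟩
    have hγ : (fun ℓ => (fun x => if h : ∃ m, lam m = x then M h.choose h.choose else 0) (lam ℓ))
        = fun ℓ => M ℓ ℓ := by
      funext ℓ
      have hex : ∃ m, lam m = lam ℓ := ⟨ℓ, rfl⟩
      simp only [dif_pos hex]
      have := hinj hex.choose_spec
      rw [this]
    rw [aux_sum_vecMulVec U _, hγ]
    have hMd : Matrix.diagonal (fun ℓ => M ℓ ℓ) = M := by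
      ext i j
      by_cases h : i = j
      · subst h; simp
      · rw [Matrix.diagonal_apply_ne _ h, hdiag h]
    rw [hMd, hSM]
  · rintro ⟨γ, hγ⟩
    rw [hγ, aux_sum_vecMulVec U _]
    have : Uᵀ * (U * Matrix.diagonal (fun ℓ => γ (lam ℓ)) * Uᵀ) * U
        = Matrix.diagonal (fun ℓ => γ (lam ℓ)) := aux_sandwich hU _
    rw [this]
    exact Matrix.isDiag_diagonal _
end

section
/- Let L be a real symmetric N×N matrix with orthonormal eigenbasis u_0,…,u_{N−1} and eigenvalues λ_0,…,λ_{N−1}, let w : ℝ → ℝ be any function, and let m, y ∈ ℝ^N. Then the function x ↦ ‖w(L)(x − m)‖₂² + ‖x − y‖₂² attains a unique global minimum at x̄ = m + g(L)(y − m), where g(λ) = 1/(1 + w(λ)²). In particular, the proximal operator of the Wiener regularizer ½‖w(L)(·−m)‖₂² is the graph Wiener denoising filter g(L) applied to the centered input. -/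
open Matrix BigOperators

lemma graphFilter_eq_diag {N : ℕ} (U : Matrix (Fin N) (Fin N) ℝ) (lam : Fin N → ℝ)
    (g : ℝ → ℝ) :
    graphFilter U lam g = U * (Matrix.diagonal (fun ℓ => g (lam ℓ))) * Uᵀ := by
  ext i j
  simp only [graphFilter, Matrix.sum_apply, Matrix.smul_apply, Matrix.vecMulVec_apply,
    smul_eq_mul, Matrix.mul_apply, Matrix.diagonal_apply, Matrix.transpose_apply, mul_ite,
    mul_zero, ite_mul, zero_mul, Finset.sum_ite_eq, Finset.sum_ite_eq', Finset.mem_univ, if_true]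
  exact Finset.sum_congr rfl (fun ℓ _ => by ring)

lemma norm_sq_mulVec {N : ℕ} (U : Matrix (Fin N) (Fin N) ℝ) (hU : Uᵀ * U = 1)
    (v : Fin N → ℝ) : ∑ i, (U.mulVec v i)^2 = ∑ i, (v i)^2 := by
  have h1 : ∀ f : Fin N → ℝ, ∑ i, (f i)^2 = f ⬝ᵥ f := by
    intro f; simp [dotProduct, sq]
  rw [h1, h1, dotProduct_mulVec, ← mulVec_transpose, mulVec_mulVec, hU, one_mulVec]

lemma quad_key (a c t : ℝ) (ha : 0 ≤ a) :
    a*t^2 + (t-c)^2 = a*(c/(1+a))^2 + (c/(1+a) - c)^2 + (1+a)*(t - c/(1+a))^2 := by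
  have h : (0:ℝ) < 1+a := by linarith
  field_simp
  ring

/-- **Proximal operator of the Wiener regularizer (Section V).** For a real symmetric `L` with
orthonormal eigenbasis (columns of `U`) and eigenvalues `lam`, and any `w : ℝ → ℝ`, the map
`x ↦ ‖w(L)(x − m)‖₂² + ‖x − y‖₂²` attains a unique global minimum at
`x̄ = m + g(L)(y − m)` where `g(λ) = 1/(1 + w(λ)²)`. -/
theorem wiener_prox_is_filter
    {N : ℕ} (L U : Matrix (Fin N) (Fin N) ℝ) (lam : Fin N → ℝ) (w : ℝ → ℝ)
    (m y : Fin N → ℝ)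
    (hLsym : L.IsSymm) (hU : Uᵀ * U = 1)
    (hEig : ∀ ℓ, L.mulVec (fun i => U i ℓ) = lam ℓ • (fun i => U i ℓ)) :
    let F : (Fin N → ℝ) → ℝ := fun x =>
      (∑ i, ((graphFilter U lam w).mulVec (x - m) i)^2) + ∑ i, (x i - y i)^2
    let xbar : Fin N → ℝ :=
      m + (graphFilter U lam (fun t => 1 / (1 + (w t)^2))).mulVec (y - m)
    ∀ x : Fin N → ℝ, F xbar ≤ F x ∧ (F x = F xbar → x = xbar) := by
  intro F xbar
  have hUU : U * Uᵀ = 1 := mul_eq_one_comm.mp hU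
  set a : Fin N → ℝ := fun ℓ => (w (lam ℓ))^2 with ha_def
  have ha : ∀ ℓ, 0 ≤ a ℓ := fun ℓ => sq_nonneg _
  set z : (Fin N → ℝ) → (Fin N → ℝ) := fun x => Uᵀ.mulVec (x - m) with hz_def
  set b : Fin N → ℝ := Uᵀ.mulVec (y - m) with hb_def
  -- recover x from z x
  have hrec : ∀ x : Fin N → ℝ, U.mulVec (z x) = x - m := by
    intro x
    rw [hz_def]; rw [mulVec_mulVec, hUU, one_mulVec]
  -- F in spectral coordinates
  have hF : ∀ x : Fin N → ℝ,
      F x = ∑ ℓ, (a ℓ * (z x ℓ)^2 + (z x ℓ - b ℓ)^2) := by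
    intro x
    have hW : (graphFilter U lam w).mulVec (x - m)
        = U.mulVec (fun ℓ => w (lam ℓ) * z x ℓ) := by
      rw [graphFilter_eq_diag, ← mulVec_mulVec, ← mulVec_mulVec]
      have hd : (Matrix.diagonal fun ℓ => w (lam ℓ)) *ᵥ (Uᵀ *ᵥ (x - m))
          = fun ℓ => w (lam ℓ) * z x ℓ := by
        funext ℓ; rw [mulVec_diagonal]
      rw [hd]
    have h1 : ∑ i, ((graphFilter U lam w).mulVec (x - m) i)^2
        = ∑ ℓ, a ℓ * (z x ℓ)^2 := by
      rw [hW, norm_sq_mulVec U hU]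
      exact Finset.sum_congr rfl (fun ℓ _ => by rw [ha_def]; ring)
    have h2 : ∑ i, (x i - y i)^2 = ∑ ℓ, (z x ℓ - b ℓ)^2 := by
      have hxy : (fun i => x i - y i) = U.mulVec (fun ℓ => z x ℓ - b ℓ) := by
        have : U.mulVec (fun ℓ => z x ℓ - b ℓ) = U.mulVec (z x) - U.mulVec b := by
          rw [← mulVec_sub]; rfl
        rw [this, hrec, hb_def, mulVec_mulVec, hUU, one_mulVec]
        funext i; simp [Pi.sub_apply]
      calc ∑ i, (x i - y i)^2 = ∑ i, (U.mulVec (fun ℓ => z x ℓ - b ℓ) i)^2 := by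
              rw [← hxy]
        _ = ∑ ℓ, (z x ℓ - b ℓ)^2 := norm_sq_mulVec U hU _
    rw [show F x = (∑ i, ((graphFilter U lam w).mulVec (x - m) i)^2) + ∑ i, (x i - y i)^2 from rfl,
      h1, h2, ← Finset.sum_add_distrib]
  -- z of xbar
  have hzbar : ∀ ℓ, z xbar ℓ = b ℓ / (1 + a ℓ) := by
    intro ℓ
    have h1 : xbar - m = (graphFilter U lam (fun t => 1 / (1 + (w t)^2))).mulVec (y - m) := by
      funext i; simp [xbar]
    have h2 : z xbar = fun ℓ => (1 / (1 + a ℓ)) * b ℓ := by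
      rw [hz_def]
      show Uᵀ.mulVec (xbar - m) = _
      rw [h1, graphFilter_eq_diag, ← mulVec_mulVec, ← mulVec_mulVec, ← hb_def,
        mulVec_mulVec, mulVec_mulVec, hU, Matrix.one_mul]
      funext ℓ
      rw [mulVec_diagonal]
    rw [h2]
    have : (0:ℝ) < 1 + a ℓ := by have := ha ℓ; linarith
    field_simp
  -- main decomposition
  have hdecomp : ∀ x : Fin N → ℝ,
      F x = F xbar + ∑ ℓ, (1 + a ℓ) * (z x ℓ - z xbar ℓ)^2 := by
    intro x
    rw [hF x, hF xbar, ← Finset.sum_add_distrib]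
    refine Finset.sum_congr rfl (fun ℓ _ => ?_)
    rw [hzbar ℓ]
    exact quad_key (a ℓ) (b ℓ) (z x ℓ) (ha ℓ)
  intro x
  have hnn : (0:ℝ) ≤ ∑ ℓ, (1 + a ℓ) * (z x ℓ - z xbar ℓ)^2 := by
    apply Finset.sum_nonneg
    intro ℓ _
    have := ha ℓ
    positivity
  constructor
  · rw [hdecomp x]; linarith
  · intro heq
    have hsum0 : ∑ ℓ, (1 + a ℓ) * (z x ℓ - z xbar ℓ)^2 = 0 := by
      have := hdecomp x; linarith
    have hzeq : z x = z xbar := by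
      funext ℓ
      have hterm : (1 + a ℓ) * (z x ℓ - z xbar ℓ)^2 = 0 := by
        have := Finset.sum_eq_zero_iff_of_nonneg (fun ℓ _ => by
          have := ha ℓ; positivity : ∀ ℓ ∈ Finset.univ, (0:ℝ) ≤ (1 + a ℓ) * (z x ℓ - z xbar ℓ)^2)
        exact (this.mp hsum0) ℓ (Finset.mem_univ ℓ)
      have hpos : (0:ℝ) < 1 + a ℓ := by have := ha ℓ; linarith
      have : (z x ℓ - z xbar ℓ)^2 = 0 := by
        rcases mul_eq_zero.mp hterm with h | h
        · linarith
        · exact h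
      have := pow_eq_zero_iff (n := 2) (by norm_num) |>.mp this
      linarith [this]
    have : x - m = xbar - m := by
      rw [← hrec x, ← hrec xbar, hzeq]
    funext i
    have := congrFun this i
    simp only [Pi.sub_apply] at this
    linarith
end

section
/- Let s, n, h be real numbers with s > 0, n ≥ 0, and h ≠ 0. Then for every z ≥ 0, (n·s²)/(n + h²s²) ≤ (z²s² + h²n)/(z + h²)², with equality if and only if z = n/s². In particular, the function z ↦ (z²s² + h²n)/(z + h²)² on [0, ∞) attains its unique minimum at z = n/s², and the minimal value is n·s²/(n + h²s²). -/
/-- **Optimal penalization weight (proof of Theorem 5).** For `s > 0`, `n ≥ 0`, `h ≠ 0`, the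
function `z ↦ (z²s² + h²n)/(z + h²)²` on `[0, ∞)` is bounded below by `n·s²/(n + h²s²)`, with
equality exactly at `z = n/s²`; in particular it attains its unique minimum there. -/
theorem optimal_wiener_weight
    (s n h : ℝ) (hs : 0 < s) (hn : 0 ≤ n) (hh : h ≠ 0) :
    ∀ z : ℝ, 0 ≤ z →
      (n * s^2) / (n + h^2 * s^2) ≤ (z^2 * s^2 + h^2 * n) / (z + h^2)^2 ∧
      ((z^2 * s^2 + h^2 * n) / (z + h^2)^2 = (n * s^2) / (n + h^2 * s^2) ↔ z = n / s^2) := by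
  intro z hz
  have hh2 : 0 < h ^ 2 := by positivity
  have hd1 : 0 < n + h ^ 2 * s ^ 2 := by positivity
  have hd2 : 0 < (z + h ^ 2) ^ 2 := by positivity
  have key : (z^2 * s^2 + h^2 * n) / (z + h^2)^2 - (n * s^2) / (n + h^2 * s^2)
      = h^2 * (n - s^2 * z)^2 / ((z + h^2)^2 * (n + h^2 * s^2)) := by
    field_simp
    ring
  constructor
  · have : 0 ≤ h^2 * (n - s^2 * z)^2 / ((z + h^2)^2 * (n + h^2 * s^2)) := by positivity
    linarith [key ▸ this]
  · constructor
    · intro he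
      have h0 : h^2 * (n - s^2 * z)^2 / ((z + h^2)^2 * (n + h^2 * s^2)) = 0 := by
        rw [← key, he]; ring
      have : (n - s^2 * z)^2 = 0 := by
        have hden : (z + h^2)^2 * (n + h^2 * s^2) ≠ 0 := by positivity
        have := (div_eq_zero_iff.mp h0).resolve_right hden
        rcases mul_eq_zero.mp this with h' | h'
        · exact absurd h' (ne_of_gt hh2)
        · exact h'
      have : n - s^2 * z = 0 := by nlinarith [sq_nonneg (n - s^2 * z)]
      field_simp
      linarith
    · intro he
      subst he
      have hs2 : (s:ℝ)^2 ≠ 0 := by positivity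
      have : n - s^2 * (n / s^2) = 0 := by field_simp; ring
      have h0 : h^2 * (n - s^2 * (n / s^2))^2 / ((n / s^2 + h^2)^2 * (n + h^2 * s^2)) = 0 := by
        rw [this]; simp
      linarith [key, h0]
end
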